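/- arXiv:2104.08460 — 2 statements merged into one kernel-verified Lean document; each statement's English description precedes it below -/
import Mathlib

section
/- If 1/(m+n) < R/d < 1/m, then the derivative of φ_R at x = 0 is strictly negative, the derivative of φ_R at x = 1 is strictly negative, and the derivative of φ_R at x = x* is strictly positive (so x = 0 and x = 1 are asymptotically stable equilibria of ẋ = φ_R(x) and x = x* is unstable). -/
lemma phi_hasDerivAt (m n d R x : ℝ) (hx : m + n * x ≠ 0) :
    HasDerivAt (fun x : ℝ => (x * (1 - x) / (m + n * x)) * (R - d / (m + n * x)))
      (((1 - 2*x) * (m + n*x) - x*(1-x)*n) / (m + n*x)^2 * (R - d / (m + n*x))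
        + x*(1-x)/(m+n*x) * (d*n/(m+n*x)^2)) x := by
  have hs : HasDerivAt (fun x : ℝ => m + n * x) n x := by
    have h := ((hasDerivAt_id x).const_mul n).const_add m
    simp only [id_eq, mul_one] at h
    exact h
  have hp : HasDerivAt (fun x : ℝ => x * (1 - x)) (1 - 2*x) x := by
    have h := (hasDerivAt_id x).mul ((hasDerivAt_const x 1).sub (hasDerivAt_id x))
    simp only [id_eq] at h
    refine h.congr_deriv ?_
    simp only [Pi.sub_apply, id_eq]
    ring
  have hu := hp.div hs hx
  have hv := (hasDerivAt_const x R).sub ((hasDerivAt_const x d).div hs hx)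
  have h := hu.mul hv
  refine h.congr_deriv ?_
  simp only [Pi.sub_apply, Pi.div_apply]
  ring

/-- If 1/(m+n) < R/d < 1/m, then φ_R'(0) < 0, φ_R'(1) < 0, and φ_R'(x*) > 0. -/
theorem stmt_5 (m n : ℕ) (hm : 0 < m) (hn : 0 < n) (d R : ℝ) (hd : 0 < d) (hR : 0 < R)
    (h1 : 1 / ((m : ℝ) + n) < R / d) (h2 : R / d < 1 / (m : ℝ)) :
    deriv (fun x : ℝ => (x * (1 - x) / ((m : ℝ) + n * x)) * (R - d / ((m : ℝ) + n * x))) 0 < 0 ∧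
    deriv (fun x : ℝ => (x * (1 - x) / ((m : ℝ) + n * x)) * (R - d / ((m : ℝ) + n * x))) 1 < 0 ∧
    0 < deriv (fun x : ℝ => (x * (1 - x) / ((m : ℝ) + n * x)) * (R - d / ((m : ℝ) + n * x)))
      (1 / (n : ℝ) * (d / R - m)) := by
  have hM : (0:ℝ) < m := by exact_mod_cast hm
  have hN : (0:ℝ) < n := by exact_mod_cast hn
  have hMN : (0:ℝ) < (m:ℝ) + n := by linarith
  have hA : (m:ℝ) * R < d := by
    rw [div_lt_div_iff₀ hd hM] at h2; linarith
  have hB : d < R * ((m:ℝ) + n) := by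
    rw [div_lt_div_iff₀ hMN hd] at h1; linarith
  set t : ℝ := 1 / (n : ℝ) * (d / R - m) with ht
  have hst : (m:ℝ) + n * t = d / R := by
    field_simp [ht]
    rw [ht]; field_simp; ring
  have hdR : (0:ℝ) < d / R := div_pos hd hR
  have ht0 : 0 < t := by
    rw [ht]
    have h' : (m:ℝ) < d / R := by rw [lt_div_iff₀ hR]; linarith
    have : (0:ℝ) < d / R - m := by linarith
    positivity
  have ht1 : t < 1 := by
    have hlt : d / R < (m:ℝ) + n := by rw [div_lt_iff₀ hR]; linarith
    rw [ht, one_div, inv_mul_lt_iff₀ hN]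
    linarith
  refine ⟨?_, ?_, ?_⟩
  · have h0 : (m:ℝ) + n * 0 ≠ 0 := by simp; linarith
    rw [(phi_hasDerivAt (m:ℝ) n d R 0 h0).deriv]
    have : (m:ℝ) + n * 0 = m := by ring
    rw [this]
    have hRd : R - d / m < 0 := by
      rw [sub_neg, lt_div_iff₀ hM]; linarith
    have h1m : (0:ℝ) < 1 / (m:ℝ) := by positivity
    have heq : ((1 - 2*(0:ℝ)) * (m:ℝ) - 0*(1-0)*n) / (m:ℝ)^2 * (R - d / m)
        + 0*(1-0)/(m:ℝ) * (d*n/(m:ℝ)^2) = ((m:ℝ) / m^2) * (R - d/m) := by ring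
    rw [heq]
    have hpos : (0:ℝ) < (m:ℝ) / m^2 := by positivity
    exact mul_neg_of_pos_of_neg hpos hRd
  · have h1' : (m:ℝ) + n * 1 ≠ 0 := by nlinarith
    rw [(phi_hasDerivAt (m:ℝ) n d R 1 h1').deriv]
    have he : (m:ℝ) + n * 1 = m + n := by ring
    rw [he]
    have hRd : 0 < R - d / ((m:ℝ)+n) := by
      rw [sub_pos, div_lt_iff₀ hMN]; linarith
    have h1m : (0:ℝ) < ((m:ℝ)+n) / ((m:ℝ)+n)^2 := by positivity
    have heq : ((1 - 2*(1:ℝ)) * ((m:ℝ)+n) - 1*(1-1)*n) / ((m:ℝ)+n)^2 * (R - d / ((m:ℝ)+n))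
        + 1*(1-1)/((m:ℝ)+n) * (d*n/((m:ℝ)+n)^2)
        = -((((m:ℝ)+n) / ((m:ℝ)+n)^2) * (R - d/((m:ℝ)+n))) := by ring
    rw [heq]
    have := mul_pos h1m hRd
    linarith
  · have hts : (m:ℝ) + n * t ≠ 0 := by rw [hst]; positivity
    rw [(phi_hasDerivAt (m:ℝ) n d R t hts).deriv, hst]
    have hzero : R - d / (d / R) = 0 := by
      rw [div_div_eq_mul_div]
      field_simp
      ring
    rw [hzero, mul_zero, zero_add]
    have : 0 < t * (1 - t) / (d / R) := by
      apply div_pos _ hdR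
      nlinarith
    have : 0 < d * n / (d/R)^2 := by positivity
    positivity
end

section
/- Suppose 0 < R < d/(m+n). If x : [0,∞) → [0,1] is differentiable and satisfies x'(t) = φ_R(x(t)) for all t ≥ 0 with x(0) ∈ [0,1), then x(t) → 0 as t → ∞ (i.e., the basin of attraction of the equilibrium x = 0 contains [0,1)). -/
/-!
On `[0,1]` the field factors as `φ_R(y) = y(1-y)/(m+ny) · (R - d/(m+ny))`; the first factor is
nonnegative and, since `m + ny ≤ m + n`, the second is at most `R - d/(m+n) < 0`. Hence every
trajectory is nonincreasing. If it stayed above some `ε > 0`, it would lie in `[ε, x 0]` with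
`x 0 < 1`, where `φ_R` is bounded above by a negative constant, so it would decrease at least
linearly and leave `[0,1]`.
-/

open Filter Set

noncomputable def replicatorField (m n d R y : ℝ) : ℝ :=
  y * (1 - y) / (m + n * y) * (R - d / (m + n * y))

lemma replicatorField_le {m n d R ε b y : ℝ} (hm : 0 < m) (hn : 0 ≤ n) (hd : 0 ≤ d)
    (hR : R ≤ d / (m + n)) (hε : 0 ≤ ε) (hεy : ε ≤ y) (hyb : y ≤ b) (hb : b ≤ 1) :
    replicatorField m n d R y ≤ -(ε * (1 - b) / (m + n) * (d / (m + n) - R)) := by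
  have hden_pos : 0 < m + n * y := by nlinarith
  have hden_le : m + n * y ≤ m + n := by nlinarith
  have hgain : ε * (1 - b) / (m + n) ≤ y * (1 - y) / (m + n * y) :=
    div_le_div₀ (by nlinarith) (mul_le_mul hεy (by linarith) (by linarith) (by linarith))
      hden_pos hden_le
  have hcost : R - d / (m + n * y) ≤ R - d / (m + n) := by
    gcongr
  calc replicatorField m n d R y
      ≤ ε * (1 - b) / (m + n) * (R - d / (m + n * y)) :=
        mul_le_mul_of_nonpos_right hgain (by linarith)
    _ ≤ ε * (1 - b) / (m + n) * (R - d / (m + n)) :=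
        mul_le_mul_of_nonneg_left hcost (by apply div_nonneg <;> nlinarith)
    _ = -(ε * (1 - b) / (m + n) * (d / (m + n) - R)) := by ring

lemma sub_le_mul_sub_of_hasDerivAt_le {f f' : ℝ → ℝ} {a C : ℝ}
    (hf : ∀ t, a ≤ t → HasDerivAt f (f' t) t) (hle : ∀ t, a ≤ t → f' t ≤ C)
    {s t : ℝ} (hs : a ≤ s) (hst : s ≤ t) : f t - f s ≤ C * (t - s) := by
  refine (convex_Ici a).image_sub_le_mul_sub_of_deriv_le
    (fun u hu => (hf u hu).continuousAt.continuousWithinAt) (fun u hu => ?_) (fun u hu => ?_)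
    s hs t (hs.trans hst) hst
  all_goals rw [interior_Ici] at hu
  · exact (hf u hu.le).differentiableAt.differentiableWithinAt
  · exact (hf u hu.le).deriv ▸ hle u hu.le

section Trajectory

variable {m n d R : ℝ} {x : ℝ → ℝ}

lemma replicator_trajectory_antitone (hm : 0 < m) (hn : 0 ≤ n) (hd : 0 ≤ d)
    (hR : R ≤ d / (m + n)) (hmem : ∀ t, 0 ≤ t → x t ∈ Icc (0 : ℝ) 1)
    (hode : ∀ t, 0 ≤ t → HasDerivAt x (replicatorField m n d R (x t)) t)
    {s t : ℝ} (hs : 0 ≤ s) (hst : s ≤ t) : x t ≤ x s := by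
  have hφ : ∀ t, 0 ≤ t → replicatorField m n d R (x t) ≤ 0 := fun t ht => by
    simpa using replicatorField_le hm hn hd hR le_rfl (hmem t ht).1 (hmem t ht).2 le_rfl
  linarith [sub_le_mul_sub_of_hasDerivAt_le hode hφ hs hst]

lemma replicator_trajectory_exists_lt (hm : 0 < m) (hn : 0 ≤ n) (hd : 0 ≤ d)
    (hR : R < d / (m + n)) (hmem : ∀ t, 0 ≤ t → x t ∈ Icc (0 : ℝ) 1)
    (hode : ∀ t, 0 ≤ t → HasDerivAt x (replicatorField m n d R (x t)) t)
    (h0 : x 0 < 1) {ε : ℝ} (hε : 0 < ε) : ∃ T, 0 ≤ T ∧ x T < ε := by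
  by_contra! hge
  set c := ε * (1 - x 0) / (m + n) * (d / (m + n) - R)
  have hc : 0 < c := by
    have : 0 < m + n := by linarith
    have : 0 < d / (m + n) - R := by linarith
    positivity
  have hφ : ∀ t, 0 ≤ t → replicatorField m n d R (x t) ≤ -c := fun t ht =>
    replicatorField_le hm hn hd hR.le hε.le (hge t ht)
      (replicator_trajectory_antitone hm hn hd hR.le hmem hode le_rfl ht) h0.le
  -- by time `x 0 / c + 1` the trajectory would have dropped below `0`
  have hT : (0 : ℝ) ≤ x 0 / c + 1 := by positivity [(hmem 0 le_rfl).1]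
  have hdrop := sub_le_mul_sub_of_hasDerivAt_le hode hφ le_rfl hT
  have hcancel : c * (x 0 / c) = x 0 := mul_div_cancel₀ _ hc.ne'
  nlinarith [(hmem _ hT).1]

end Trajectory

theorem stmt_12_general (m n : ℕ) (hm : 0 < m) (d R : ℝ) (hd : 0 < d)
    (h : R < d / ((m : ℝ) + n))
    (x : ℝ → ℝ)
    (hmem : ∀ t : ℝ, 0 ≤ t → x t ∈ Set.Icc (0 : ℝ) 1)
    (hode : ∀ t : ℝ, 0 ≤ t →
      HasDerivAt x
        ((x t * (1 - x t) / ((m : ℝ) + n * x t)) * (R - d / ((m : ℝ) + n * x t))) t)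
    (h0 : x 0 ∈ Set.Ico (0 : ℝ) 1) :
    Filter.Tendsto x Filter.atTop (nhds 0) := by
  have hm' : (0 : ℝ) < m := by exact_mod_cast hm
  have hn' : (0 : ℝ) ≤ n := n.cast_nonneg
  refine tendsto_order.2 ⟨fun a ha => ?_, fun ε hε => ?_⟩
  · filter_upwards [eventually_ge_atTop 0] with t ht
    exact ha.trans_le (hmem t ht).1
  · obtain ⟨T, hT, hxT⟩ :=
      replicator_trajectory_exists_lt hm' hn' hd.le h hmem hode h0.2 hε
    filter_upwards [eventually_ge_atTop T] with t ht
    exact (replicator_trajectory_antitone hm' hn' hd.le h.le hmem hode hT ht).trans_lt hxT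

/-- If 0 < R < d/(m+n), every trajectory of ẋ = φ_R(x) on [0,1] starting
in [0,1) converges to 0. -/
theorem stmt_12 (m n : ℕ) (hm : 0 < m) (hn : 0 < n) (d R : ℝ) (hd : 0 < d) (hR : 0 < R)
    (h : R < d / ((m : ℝ) + n))
    (x : ℝ → ℝ)
    (hmem : ∀ t : ℝ, 0 ≤ t → x t ∈ Set.Icc (0 : ℝ) 1)
    (hode : ∀ t : ℝ, 0 ≤ t →
      HasDerivAt x
        ((x t * (1 - x t) / ((m : ℝ) + n * x t)) * (R - d / ((m : ℝ) + n * x t))) t)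
    (h0 : x 0 ∈ Set.Ico (0 : ℝ) 1) :
    Filter.Tendsto x Filter.atTop (nhds 0) :=
  stmt_12_general m n hm d R hd h x hmem hode h0
end
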